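/- arXiv:quant-ph/0702243 — 6 statements merged into one kernel-verified Lean document; each statement's English description precedes it below -/
import Mathlib

section
/- Let J_1,…,J_M be n×n complex matrices, λ_1,…,λ_M positive reals, and let ψ ∈ ℂⁿ be a unit vector. If L_D[ψψᴴ] = 0, then for every l = 1,…,M there exists a complex number c_l such that J_l ψ = c_l ψ; that is, ψ is a simultaneous eigenvector of all the jump operators. -/
open Matrix BigOperators

/-- The decoherence superoperator `L_D[ρ] = Σ_l λ_l (J_l ρ J_lᴴ − ½ J_lᴴ J_l ρ − ½ ρ J_lᴴ J_l)`. -/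
noncomputable def LD {M n : ℕ} (J : Fin M → Matrix (Fin n) (Fin n) ℂ)
    (lam : Fin M → ℝ) (ρ : Matrix (Fin n) (Fin n) ℂ) : Matrix (Fin n) (Fin n) ℂ :=
  ∑ l, (lam l : ℂ) • (J l * ρ * (J l)ᴴ
    - (1 / 2 : ℂ) • ((J l)ᴴ * J l * ρ) - (1 / 2 : ℂ) • (ρ * ((J l)ᴴ * J l)))

/-- The decoherence operator `Γ = Σ_l λ_l J_lᴴ J_l`. -/
noncomputable def Gam {M n : ℕ} (J : Fin M → Matrix (Fin n) (Fin n) ℂ)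
    (lam : Fin M → ℝ) : Matrix (Fin n) (Fin n) ℂ :=
  ∑ l, (lam l : ℂ) • ((J l)ᴴ * J l)

private lemma aux_sum_mulVec {M n : ℕ} (A : Fin M → Matrix (Fin n) (Fin n) ℂ)
    (ψ : Fin n → ℂ) : (∑ l, A l) *ᵥ ψ = ∑ l, A l *ᵥ ψ := by
  ext i; simp [mulVec, dotProduct, Matrix.sum_apply, Finset.sum_mul]
  rw [Finset.sum_comm]

private lemma aux_dot_sum {M n : ℕ} (f : Fin M → Fin n → ℂ) (ψ : Fin n → ℂ) :
    ψ ⬝ᵥ ∑ l, f l = ∑ l, ψ ⬝ᵥ f l := by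
  simp [dotProduct, Finset.sum_apply, Finset.mul_sum]
  rw [Finset.sum_comm]

/-- If `L_D[ψψᴴ] = 0` for a unit vector `ψ`, then `ψ` is a simultaneous eigenvector of
all the jump operators `J_l`. -/
theorem stmt2 {M n : ℕ} (J : Fin M → Matrix (Fin n) (Fin n) ℂ) (lam : Fin M → ℝ)
    (hlam : ∀ l, 0 < lam l) (ψ : Fin n → ℂ) (hψ : star ψ ⬝ᵥ ψ = 1)
    (hLD : LD J lam (vecMulVec ψ (star ψ)) = 0) :
    ∀ l, ∃ c : ℂ, (J l).mulVec ψ = c • ψ := by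
  set P := vecMulVec ψ (star ψ) with hP
  have hPmul : ∀ x : Fin n → ℂ, P.mulVec x = (star ψ ⬝ᵥ x) • ψ := by
    intro x; ext i
    simp [hP, vecMulVec, mulVec, dotProduct, Finset.sum_mul, Finset.mul_sum]
    exact Finset.sum_congr rfl fun j _ => by ring
  set c : Fin M → ℂ := fun l => star ψ ⬝ᵥ (J l).mulVec ψ with hc
  set v : Fin M → Fin n → ℂ := fun l => (J l).mulVec ψ with hv
  set w : Fin M → Fin n → ℂ := fun l => v l - c l • ψ with hw
  have h0 : star ψ ⬝ᵥ (LD J lam P).mulVec ψ = 0 := by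
    rw [hLD]; simp
  have hψv : ∀ l, star ψ ⬝ᵥ v l = c l := fun l => rfl
  have hvψ : ∀ l, star (v l) ⬝ᵥ ψ = star (c l) := by
    intro l
    rw [star_dotProduct]
  have hterm : ∀ l, star ψ ⬝ᵥ ((J l * P * (J l)ᴴ
      - (1 / 2 : ℂ) • ((J l)ᴴ * J l * P) - (1 / 2 : ℂ) • (P * ((J l)ᴴ * J l))).mulVec ψ)
      = c l * star (c l) - star (v l) ⬝ᵥ v l := by
    intro l
    have e1 : (J l * P * (J l)ᴴ).mulVec ψ = star (c l) • v l := by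
      rw [← Matrix.mulVec_mulVec, ← Matrix.mulVec_mulVec, hPmul]
      have : star ψ ⬝ᵥ (J l)ᴴ.mulVec ψ = star (c l) := by
        rw [Matrix.dotProduct_mulVec, ← Matrix.star_mulVec, star_dotProduct]
      rw [this, Matrix.mulVec_smul]
    have e2 : ((J l)ᴴ * J l * P).mulVec ψ = ((J l)ᴴ * J l).mulVec ψ := by
      rw [← Matrix.mulVec_mulVec, hPmul, hψ, one_smul]
    have e3 : (P * ((J l)ᴴ * J l)).mulVec ψ = (star (v l) ⬝ᵥ v l) • ψ := by
      rw [← Matrix.mulVec_mulVec, hPmul]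
      congr 1
      rw [← Matrix.mulVec_mulVec, Matrix.dotProduct_mulVec, ← Matrix.star_mulVec]
    have e4 : star ψ ⬝ᵥ ((J l)ᴴ * J l).mulVec ψ = star (v l) ⬝ᵥ v l := by
      rw [← Matrix.mulVec_mulVec, Matrix.dotProduct_mulVec, ← Matrix.star_mulVec]
    rw [Matrix.sub_mulVec, Matrix.sub_mulVec, Matrix.smul_mulVec,
      Matrix.smul_mulVec, e1, e2, e3]
    rw [dotProduct_sub, dotProduct_sub, dotProduct_smul, dotProduct_smul,
      dotProduct_smul, e4, dotProduct_smul, hψ]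
    simp only [smul_eq_mul, mul_one, hψv l]
    ring
  have hwnorm : ∀ l, star (w l) ⬝ᵥ w l = star (v l) ⬝ᵥ v l - c l * star (c l) := by
    intro l
    have : star (w l) = star (v l) - star (c l) • star ψ := by
      simp [hw, star_smul]
    rw [this, hw]
    simp only [sub_dotProduct, dotProduct_sub, smul_dotProduct, dotProduct_smul,
      hψv l, hvψ l, hψ, smul_eq_mul, mul_one]
    ring
  have hsum : ∑ l, (lam l : ℂ) * (star (w l) ⬝ᵥ w l) = 0 := by
    have key : star ψ ⬝ᵥ (LD J lam P).mulVec ψ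
        = ∑ l, (lam l : ℂ) * (c l * star (c l) - star (v l) ⬝ᵥ v l) := by
      unfold LD
      rw [aux_sum_mulVec, aux_dot_sum]
      refine Finset.sum_congr rfl fun l _ => ?_
      rw [Matrix.smul_mulVec, dotProduct_smul, hterm l]
      simp
    rw [h0] at key
    have : ∑ l, (lam l : ℂ) * (star (w l) ⬝ᵥ w l)
        = -∑ l, (lam l : ℂ) * (c l * star (c l) - star (v l) ⬝ᵥ v l) := by
      rw [← Finset.sum_neg_distrib]
      refine Finset.sum_congr rfl fun l _ => ?_
      rw [hwnorm l]; ring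
    rw [this, ← key, neg_zero]
  -- convert to real sum
  have hreal : ∀ l, star (w l) ⬝ᵥ w l = ((∑ i, Complex.normSq (w l i) : ℝ) : ℂ) := by
    intro l
    simp only [dotProduct, Pi.star_apply, Complex.ofReal_sum]
    exact Finset.sum_congr rfl fun i _ => by
      rw [Complex.star_def, Complex.normSq_eq_conj_mul_self]
  have hrsum : ∑ l, lam l * (∑ i, Complex.normSq (w l i)) = 0 := by
    have := hsum
    simp only [hreal] at this
    have h2 : ((∑ l, lam l * ∑ i, Complex.normSq (w l i) : ℝ) : ℂ) = 0 := by
      push_cast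
      push_cast at this
      exact this
    exact_mod_cast h2
  have hznn : ∀ l ∈ Finset.univ, 0 ≤ lam l * (∑ i, Complex.normSq (w l i)) := by
    intro l _
    exact mul_nonneg (hlam l).le (Finset.sum_nonneg fun i _ => Complex.normSq_nonneg _)
  have hzero : ∀ l, lam l * (∑ i, Complex.normSq (w l i)) = 0 := by
    intro l
    exact (Finset.sum_eq_zero_iff_of_nonneg hznn).mp hrsum l (Finset.mem_univ l)
  intro l
  refine ⟨c l, ?_⟩
  have hnsq : ∑ i, Complex.normSq (w l i) = 0 := by
    have := hzero l
    rcases mul_eq_zero.mp this with h | h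
    · exact absurd h (hlam l).ne'
    · exact h
  have hwz : w l = 0 := by
    funext i
    have := (Finset.sum_eq_zero_iff_of_nonneg
      (fun i _ => Complex.normSq_nonneg (w l i))).mp hnsq i (Finset.mem_univ i)
    exact Complex.normSq_eq_zero.mp this
  have : v l - c l • ψ = 0 := hwz
  have := sub_eq_zero.mp this
  exact this
end

section
/- Let J_1,…,J_M be n×n complex matrices, λ_1,…,λ_M positive reals, and let ψ ∈ ℂⁿ be a unit vector with L_D[ψψᴴ] = 0. Set c_l = ⟨ψ, J_l ψ⟩ for each l (these are the eigenvalues of ψ under the J_l). Then Γ ψ = g ψ with g = Σ_{l=1}^M λ_l |c_l|². -/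
open Matrix BigOperators

private lemma sum_mulVec' {M n : ℕ} (A : Fin M → Matrix (Fin n) (Fin n) ℂ) (v : Fin n → ℂ) :
    (∑ l, A l) *ᵥ v = ∑ l, A l *ᵥ v := by
  ext i
  simp only [Matrix.mulVec, dotProduct, Matrix.sum_apply, Finset.sum_apply,
    Finset.sum_mul]
  rw [Finset.sum_comm]

private lemma dotProduct_sum' {M n : ℕ} (u : Fin n → ℂ) (f : Fin M → Fin n → ℂ) :
    u ⬝ᵥ (∑ l, f l) = ∑ l, u ⬝ᵥ f l := by
  simp only [dotProduct, Finset.sum_apply, Finset.mul_sum]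
  rw [Finset.sum_comm]

private lemma vecMulVec_mulVec' {n : ℕ} (a b x : Fin n → ℂ) :
    (vecMulVec a b) *ᵥ x = (b ⬝ᵥ x) • a := by
  ext i
  simp [Matrix.mulVec, dotProduct, vecMulVec_apply, Finset.mul_sum, Finset.sum_mul,
    mul_comm, mul_left_comm]

private lemma star_dot_self' {n : ℕ} (v : Fin n → ℂ) :
    star v ⬝ᵥ v = ((∑ i, Complex.normSq (v i) : ℝ) : ℂ) := by
  push_cast
  simp [dotProduct, Complex.normSq_eq_conj_mul_self]

private lemma star_mul_self' (z : ℂ) : star z * z = ((Complex.normSq z : ℝ) : ℂ) := by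
  rw [Complex.normSq_eq_conj_mul_self]; rfl

/-- If `L_D[ψψᴴ] = 0` for a unit vector `ψ`, then with `c_l = ⟨ψ, J_l ψ⟩`, the vector `ψ`
is an eigenvector of the decoherence operator `Γ` with eigenvalue `g = Σ_l λ_l |c_l|²`. -/
theorem stmt3 {M n : ℕ} (J : Fin M → Matrix (Fin n) (Fin n) ℂ) (lam : Fin M → ℝ)
    (hlam : ∀ l, 0 < lam l) (ψ : Fin n → ℂ) (hψ : star ψ ⬝ᵥ ψ = 1)
    (hLD : LD J lam (vecMulVec ψ (star ψ)) = 0)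
    (c : Fin M → ℂ) (hc : ∀ l, c l = star ψ ⬝ᵥ (J l).mulVec ψ)
    (g : ℂ) (hg : g = ∑ l, ((lam l * Complex.normSq (c l) : ℝ) : ℂ)) :
    (Gam J lam).mulVec ψ = g • ψ := by
  have hρψ : (vecMulVec ψ (star ψ)) *ᵥ ψ = ψ := by rw [vecMulVec_mulVec', hψ, one_smul]
  have hstarc : ∀ l, star ψ ⬝ᵥ ((J l)ᴴ *ᵥ ψ) = star (c l) := by
    intro l
    rw [dotProduct_mulVec, ← star_mulVec, star_dotProduct, ← hc]
  have hww : ∀ l, star ψ ⬝ᵥ ((J l)ᴴ *ᵥ (J l *ᵥ ψ)) = star (J l *ᵥ ψ) ⬝ᵥ (J l *ᵥ ψ) := by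
    intro l
    rw [dotProduct_mulVec, ← star_mulVec]
  have e1 : ∀ l, (J l * (vecMulVec ψ (star ψ)) * (J l)ᴴ) *ᵥ ψ = star (c l) • (J l *ᵥ ψ) := by
    intro l
    rw [← mulVec_mulVec, ← mulVec_mulVec, vecMulVec_mulVec', hstarc, mulVec_smul]
  have e2 : ∀ l, ((J l)ᴴ * J l * (vecMulVec ψ (star ψ))) *ᵥ ψ = (J l)ᴴ *ᵥ (J l *ᵥ ψ) := by
    intro l
    rw [← mulVec_mulVec, hρψ, ← mulVec_mulVec]
  have e3 : ∀ l, ((vecMulVec ψ (star ψ)) * ((J l)ᴴ * J l)) *ᵥ ψ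
      = (star (J l *ᵥ ψ) ⬝ᵥ (J l *ᵥ ψ)) • ψ := by
    intro l
    rw [← mulVec_mulVec, ← mulVec_mulVec, vecMulVec_mulVec', hww]
  have hvec : ∑ l, (lam l : ℂ) • (star (c l) • (J l *ᵥ ψ)
      - (1/2 : ℂ) • ((J l)ᴴ *ᵥ (J l *ᵥ ψ))
      - (1/2 : ℂ) • ((star (J l *ᵥ ψ) ⬝ᵥ (J l *ᵥ ψ)) • ψ)) = 0 := by
    have h0 : (LD J lam (vecMulVec ψ (star ψ))) *ᵥ ψ = 0 := by rw [hLD, zero_mulVec]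
    rw [LD, sum_mulVec'] at h0
    rw [← h0]
    refine Finset.sum_congr rfl fun l _ => ?_
    rw [smul_mulVec, sub_mulVec, sub_mulVec, smul_mulVec, smul_mulVec,
      e1, e2, e3]
  -- deviation vectors
  have hdot : ∀ l, star ((J l *ᵥ ψ) - c l • ψ) ⬝ᵥ ((J l *ᵥ ψ) - c l • ψ)
      = star (J l *ᵥ ψ) ⬝ᵥ (J l *ᵥ ψ) - ((Complex.normSq (c l) : ℝ) : ℂ) := by
    intro l
    have h1 : star ψ ⬝ᵥ (J l *ᵥ ψ) = c l := (hc l).symm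
    have h2 : star (J l *ᵥ ψ) ⬝ᵥ ψ = star (c l) := by
      rw [star_dotProduct, h1]
    simp only [star_sub, star_smul, sub_dotProduct, dotProduct_sub, smul_dotProduct,
      dotProduct_smul, h1, h2, hψ, smul_eq_mul, mul_one]
    rw [← star_mul_self']
    ring
  have hscal : ∑ l, (lam l : ℂ)
      * (star ((J l *ᵥ ψ) - c l • ψ) ⬝ᵥ ((J l *ᵥ ψ) - c l • ψ)) = 0 := by
    have h0 : star ψ ⬝ᵥ (∑ l, (lam l : ℂ) • (star (c l) • (J l *ᵥ ψ)
        - (1/2 : ℂ) • ((J l)ᴴ *ᵥ (J l *ᵥ ψ))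
        - (1/2 : ℂ) • ((star (J l *ᵥ ψ) ⬝ᵥ (J l *ᵥ ψ)) • ψ))) = 0 := by
      rw [hvec, dotProduct_zero]
    rw [dotProduct_sum'] at h0
    have h1 : ∀ l ∈ Finset.univ, (lam l : ℂ)
        * (star ((J l *ᵥ ψ) - c l • ψ) ⬝ᵥ ((J l *ᵥ ψ) - c l • ψ))
        = -(star ψ ⬝ᵥ ((lam l : ℂ) • (star (c l) • (J l *ᵥ ψ)
        - (1/2 : ℂ) • ((J l)ᴴ *ᵥ (J l *ᵥ ψ))
        - (1/2 : ℂ) • ((star (J l *ᵥ ψ) ⬝ᵥ (J l *ᵥ ψ)) • ψ)))) := by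
      intro l _
      have h1 : star ψ ⬝ᵥ (J l *ᵥ ψ) = c l := (hc l).symm
      rw [hdot l]
      simp only [dotProduct_smul, dotProduct_sub, h1, hww l, hψ, smul_eq_mul, mul_one]
      rw [← star_mul_self']
      ring
    rw [Finset.sum_congr rfl h1, Finset.sum_neg_distrib, h0, neg_zero]
  -- each jump operator acts as a scalar on ψ
  have hwl : ∀ l, J l *ᵥ ψ = c l • ψ := by
    have hreal : ∑ l, lam l * (∑ i, Complex.normSq ((J l *ᵥ ψ - c l • ψ) i)) = 0 := by
      have hC : ((∑ l, lam l * (∑ i, Complex.normSq ((J l *ᵥ ψ - c l • ψ) i)) : ℝ) : ℂ)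
          = 0 := by
        push_cast
        rw [← hscal]
        refine Finset.sum_congr rfl fun l _ => ?_
        rw [star_dot_self']
        push_cast
        ring
      exact_mod_cast hC
    have hnn : ∀ l ∈ Finset.univ,
        (0:ℝ) ≤ lam l * (∑ i, Complex.normSq ((J l *ᵥ ψ - c l • ψ) i)) :=
      fun l _ => mul_nonneg (hlam l).le (Finset.sum_nonneg fun i _ => Complex.normSq_nonneg _)
    have hz := (Finset.sum_eq_zero_iff_of_nonneg hnn).mp hreal
    intro l
    have hl := hz l (Finset.mem_univ l)
    have hsz : ∑ i, Complex.normSq ((J l *ᵥ ψ - c l • ψ) i) = 0 := by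
      rcases mul_eq_zero.mp hl with h | h
      · exact absurd h (hlam l).ne'
      · exact h
    have hdz : J l *ᵥ ψ - c l • ψ = 0 := by
      funext i
      exact Complex.normSq_eq_zero.mp ((Finset.sum_eq_zero_iff_of_nonneg
        (fun i _ => Complex.normSq_nonneg _)).mp hsz i (Finset.mem_univ i))
    exact sub_eq_zero.mp hdz
  -- substitute back into the vector equation
  have hterm : ∀ l ∈ Finset.univ, (lam l : ℂ) • (star (c l) • (J l *ᵥ ψ)
      - (1/2 : ℂ) • ((J l)ᴴ *ᵥ (J l *ᵥ ψ))
      - (1/2 : ℂ) • ((star (J l *ᵥ ψ) ⬝ᵥ (J l *ᵥ ψ)) • ψ))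
      = (1/2 : ℂ) • ((lam l : ℂ) • (((Complex.normSq (c l) : ℝ) : ℂ) • ψ)
          - (lam l : ℂ) • ((J l)ᴴ *ᵥ (J l *ᵥ ψ))) := by
    intro l _
    have hwc : star (J l *ᵥ ψ) ⬝ᵥ (J l *ᵥ ψ) = ((Complex.normSq (c l) : ℝ) : ℂ) := by
      rw [hwl l]
      simp only [star_smul, smul_dotProduct, dotProduct_smul, hψ, smul_eq_mul, mul_one]
      rw [mul_comm]
      exact star_mul_self' (c l)
    have hsc : star (c l) • (c l • ψ) = ((Complex.normSq (c l) : ℝ) : ℂ) • ψ := by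
      rw [smul_smul, star_mul_self']
    rw [hwc, hwl l, hsc]
    module
  have hvec2 : (∑ l, ((lam l : ℂ) • (((Complex.normSq (c l) : ℝ) : ℂ) • ψ)
      - (lam l : ℂ) • ((J l)ᴴ *ᵥ (J l *ᵥ ψ)))) = 0 := by
    have h2 : (1/2 : ℂ) • (∑ l, ((lam l : ℂ) • (((Complex.normSq (c l) : ℝ) : ℂ) • ψ)
        - (lam l : ℂ) • ((J l)ᴴ *ᵥ (J l *ᵥ ψ)))) = 0 := by
      rw [Finset.smul_sum, ← hvec]
      exact (Finset.sum_congr rfl hterm).symm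
    rcases smul_eq_zero.mp h2 with h | h
    · norm_num at h
    · exact h
  have hvec3 : ∑ l, (lam l : ℂ) • ((J l)ᴴ *ᵥ (J l *ᵥ ψ))
      = ∑ l, (lam l : ℂ) • (((Complex.normSq (c l) : ℝ) : ℂ) • ψ) := by
    rw [Finset.sum_sub_distrib] at hvec2
    linear_combination (norm := module) -hvec2
  rw [Gam, sum_mulVec']
  have hG : ∑ l, ((lam l : ℂ) • ((J l)ᴴ * J l)) *ᵥ ψ
      = ∑ l, (lam l : ℂ) • ((J l)ᴴ *ᵥ (J l *ᵥ ψ)) := by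
    refine Finset.sum_congr rfl fun l _ => ?_
    rw [smul_mulVec, ← mulVec_mulVec]
  rw [hG, hvec3, hg, Finset.sum_smul]
  refine Finset.sum_congr rfl fun l _ => ?_
  rw [smul_smul]
  norm_cast
end

section
/- Let H be a Hermitian n×n complex matrix, J_1,…,J_M n×n complex matrices, λ_1,…,λ_M positive reals, c_1,…,c_M complex numbers with g = Σ_{l=1}^M λ_l |c_l|², and let S ⊆ ℂⁿ be a subspace such that: (i) H maps S into S; (ii) every ψ ∈ S satisfies J_l ψ = c_l ψ for all l and Γ ψ = g ψ. Then for every ψ₀ ∈ S and every t ∈ ℝ, exp(t𝓛)(ψ₀ψ₀ᴴ) = exp(−itH) · ψ₀ψ₀ᴴ · exp(itH). In particular, L_D evaluated on the time-evolved state exp(t𝓛)(ψ₀ψ₀ᴴ) vanishes for all t, so every pure state drawn from S undergoes purely unitary (decoherence-free) time evolution. -/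
open Matrix BigOperators

attribute [local instance] Matrix.linftyOpNormedAddCommGroup Matrix.linftyOpNormedRing
  Matrix.linftyOpNormedAlgebra

/-- The Liouvillian `𝓛[ρ] = −i[H,ρ] + L_D[ρ]` as a continuous linear endomorphism of the
space of `n×n` complex matrices (equipped with the `L∞`-operator norm). -/
noncomputable def Liou {M n : ℕ} (H : Matrix (Fin n) (Fin n) ℂ)
    (J : Fin M → Matrix (Fin n) (Fin n) ℂ) (lam : Fin M → ℝ) :
    Matrix (Fin n) (Fin n) ℂ →L[ℂ] Matrix (Fin n) (Fin n) ℂ :=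
  LinearMap.toContinuousLinearMap
    ((-Complex.I) • (LinearMap.mulLeft ℂ H - LinearMap.mulRight ℂ H)
      + ∑ l, (lam l : ℂ) •
          ((LinearMap.mulRight ℂ (J l)ᴴ).comp (LinearMap.mulLeft ℂ (J l))
            - (1 / 2 : ℂ) • LinearMap.mulLeft ℂ ((J l)ᴴ * J l)
            - (1 / 2 : ℂ) • LinearMap.mulRight ℂ ((J l)ᴴ * J l)))

/-- The Liouvillian indeed sends `ρ` to `−i[H,ρ] + L_D[ρ]`. -/
theorem Liou_apply {M n : ℕ} (H : Matrix (Fin n) (Fin n) ℂ)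
    (J : Fin M → Matrix (Fin n) (Fin n) ℂ) (lam : Fin M → ℝ)
    (ρ : Matrix (Fin n) (Fin n) ℂ) :
    Liou H J lam ρ = (-Complex.I) • (H * ρ - ρ * H) + LD J lam ρ := by
  simp [Liou, LD, LinearMap.mulLeft, LinearMap.mulRight]

/-- `exp(t𝓛)`, the exponential of the Liouvillian as a linear map. -/
noncomputable def expL {M n : ℕ} (H : Matrix (Fin n) (Fin n) ℂ)
    (J : Fin M → Matrix (Fin n) (Fin n) ℂ) (lam : Fin M → ℝ) (t : ℝ) :
    Matrix (Fin n) (Fin n) ℂ →L[ℂ] Matrix (Fin n) (Fin n) ℂ :=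
  @NormedSpace.exp _ _ _ (@NonUnitalSeminormedRing.toIsTopologicalRing _
    ContinuousLinearMap.toNormedRing.toNonUnitalNormedRing.toNonUnitalSeminormedRing)
    ((t : ℂ) • Liou H J lam)

/-- The matrix exponential `exp(−itH)`. -/
noncomputable def expM {n : ℕ} (H : Matrix (Fin n) (Fin n) ℂ) (t : ℝ) :
    Matrix (Fin n) (Fin n) ℂ :=
  NormedSpace.exp ((-(Complex.I * (t : ℂ))) • H)

/-! Let `W = operatorsOn S` be the space of matrices `ρ` with `range ρ ⊆ S` and `range ρᴴ ⊆ S`,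
i.e. the span of the `ψ χᴴ` with `ψ, χ ∈ S`. Every `J_l` and `Γ` acts on `W` by a scalar from
either side, so `J_l ρ J_lᴴ = |c_l|² ρ` and `Γ ρ = ρ Γ = g ρ`, and `L_D` vanishes on `W` because
`g = Σ λ_l |c_l|²`. Hence `𝓛` agrees on `W` with `ρ ↦ -i (H ρ - ρ H)`, which maps `W` into itself
since `H` and `Hᴴ = H` preserve `S`; so the two exponentials agree on `W`. Left and right
multiplication commute, which makes the second exponential `ρ ↦ e^{-itH} ρ e^{itH}`. Finally `W`
is closed, so `exp(t𝓛)` keeps `ψ₀ψ₀ᴴ` inside `W`, where `L_D` vanishes. -/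

open NormedSpace Nat

section Exponential

variable {𝕜 E : Type*} [RCLike 𝕜] [NormedAddCommGroup E] [NormedSpace 𝕜 E] [CompleteSpace E]

theorem hasSum_exp_apply (T : E →L[𝕜] E) (x : E) :
    HasSum (fun k : ℕ => (k ! : 𝕜)⁻¹ • (T ^ k) x) (exp T x) :=
  (exp_series_hasSum_exp' (𝕂 := 𝕜) T).mapL (ContinuousLinearMap.apply 𝕜 E x)

theorem exp_apply_mem_of_mapsTo {W : Submodule 𝕜 E} (hW : IsClosed (W : Set E))
    {T : E →L[𝕜] E} (hT : Set.MapsTo T W W) {x : E} (hx : x ∈ W) : exp T x ∈ W :=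
  hW.mem_of_tendsto (hasSum_exp_apply T x) <| Filter.Eventually.of_forall fun _ =>
    W.sum_mem fun k _ => W.smul_mem _ <| by
      rw [FunLike.coe_pow_eq_iterate]
      exact hT.iterate k hx

theorem exp_apply_eq_of_eqOn {s : Set E} {T A : E →L[𝕜] E} (hA : Set.MapsTo A s s)
    (hTA : Set.EqOn T A s) {x : E} (hx : x ∈ s) : exp T x = exp A x := by
  have hpow : ∀ k, ∀ y ∈ s, (T ^ k) y = (A ^ k) y := by
    intro k
    simp only [FunLike.coe_pow_eq_iterate]
    induction k with
    | zero => exact fun _ _ => rfl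
    | succ k ih =>
      intro y hy
      rw [Function.iterate_succ_apply, Function.iterate_succ_apply, hTA hy, ih _ (hA hy)]
  exact (hasSum_exp_apply T x).unique (by simpa only [hpow _ _ hx] using hasSum_exp_apply A x)

end Exponential

section MulLeftRight

variable {𝕜 𝔸 : Type*} [RCLike 𝕜] [NormedRing 𝔸] [NormedAlgebra 𝕜 𝔸]

variable (𝕜 𝔸) in
noncomputable def mulLeftRingHom : 𝔸 →+* (𝔸 →L[𝕜] 𝔸) :=
  { NonUnitalAlgHom.Lmul 𝕜 𝔸 with map_one' := ContinuousLinearMap.ext one_mul }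

variable (𝕜 𝔸) in
noncomputable def mulRightRingHom : 𝔸ᵐᵒᵖ →+* (𝔸 →L[𝕜] 𝔸) where
  toFun y := (ContinuousLinearMap.mul 𝕜 𝔸).flip y.unop
  map_one' := ContinuousLinearMap.ext mul_one
  map_mul' _ _ := ContinuousLinearMap.ext fun _ => (mul_assoc _ _ _).symm
  map_zero' := ContinuousLinearMap.ext mul_zero
  map_add' _ _ := ContinuousLinearMap.ext fun _ => mul_add _ _ _

variable (𝕜) in
noncomputable def mulLeftAddMulRight (x y : 𝔸) : 𝔸 →L[𝕜] 𝔸 :=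
  ContinuousLinearMap.mul 𝕜 𝔸 x + (ContinuousLinearMap.mul 𝕜 𝔸).flip y

@[simp]
theorem mulLeftAddMulRight_apply (x y z : 𝔸) : mulLeftAddMulRight 𝕜 x y z = x * z + z * y :=
  rfl

variable [CompleteSpace 𝔸]

theorem exp_mul (x : 𝔸) :
    exp (ContinuousLinearMap.mul 𝕜 𝔸 x) = ContinuousLinearMap.mul 𝕜 𝔸 (exp x) :=
  (map_exp_of_mem_ball (𝕂 := 𝕜) (mulLeftRingHom 𝕜 𝔸) (ContinuousLinearMap.mul 𝕜 𝔸).continuous x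
    (by simp [expSeries_radius_eq_top])).symm

theorem exp_flip_mul (y : 𝔸) :
    exp ((ContinuousLinearMap.mul 𝕜 𝔸).flip y) = (ContinuousLinearMap.mul 𝕜 𝔸).flip (exp y) := by
  have hcont : Continuous (mulRightRingHom 𝕜 𝔸) :=
    (ContinuousLinearMap.mul 𝕜 𝔸).flip.continuous.comp MulOpposite.continuous_unop
  have h := map_exp_of_mem_ball (𝕂 := 𝕜) (mulRightRingHom 𝕜 𝔸) hcont (MulOpposite.op y)
    (by simp [expSeries_radius_eq_top])
  rw [exp_op] at h
  exact h.symm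

theorem exp_mulLeftAddMulRight_apply (x y z : 𝔸) :
    exp (mulLeftAddMulRight 𝕜 x y) z = exp x * z * exp y := by
  have hcomm : Commute (ContinuousLinearMap.mul 𝕜 𝔸 x) ((ContinuousLinearMap.mul 𝕜 𝔸).flip y) :=
    ContinuousLinearMap.ext fun _ => (mul_assoc _ _ _).symm
  rw [mulLeftAddMulRight, exp_add_of_commute_of_mem_ball (𝕂 := 𝕜) hcomm
    (by simp [expSeries_radius_eq_top]) (by simp [expSeries_radius_eq_top]), exp_mul,
    exp_flip_mul]
  exact (mul_assoc _ _ _).symm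

end MulLeftRight

section OperatorsOn

variable {m : Type*} [Fintype m]

variable (S : Submodule ℂ (m → ℂ)) in
def operatorsOn : Submodule ℂ (Matrix m m ℂ) where
  carrier := {ρ | (∀ v, ρ *ᵥ v ∈ S) ∧ ∀ v, ρᴴ *ᵥ v ∈ S}
  add_mem' {a b} ha hb := by
    refine ⟨fun v => ?_, fun v => ?_⟩
    · rw [add_mulVec]; exact S.add_mem (ha.1 v) (hb.1 v)
    · rw [conjTranspose_add, add_mulVec]; exact S.add_mem (ha.2 v) (hb.2 v)
  zero_mem' := ⟨fun v => by simp, fun v => by simp⟩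
  smul_mem' c ρ h := by
    refine ⟨fun v => ?_, fun v => ?_⟩
    · rw [smul_mulVec]; exact S.smul_mem c (h.1 v)
    · rw [conjTranspose_smul, smul_mulVec]; exact S.smul_mem _ (h.2 v)

variable {S : Submodule ℂ (m → ℂ)} {ρ X : Matrix m m ℂ}

theorem conjTranspose_mem_operatorsOn (hρ : ρ ∈ operatorsOn S) : ρᴴ ∈ operatorsOn S :=
  ⟨hρ.2, by simpa using hρ.1⟩

theorem mul_mem_operatorsOn_left (hX : ∀ v ∈ S, X *ᵥ v ∈ S) (hρ : ρ ∈ operatorsOn S) :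
    X * ρ ∈ operatorsOn S := by
  refine ⟨fun v => ?_, fun v => ?_⟩
  · rw [← mulVec_mulVec]; exact hX _ (hρ.1 v)
  · rw [conjTranspose_mul, ← mulVec_mulVec]; exact hρ.2 _

theorem mul_mem_operatorsOn_right (hX : ∀ v ∈ S, Xᴴ *ᵥ v ∈ S) (hρ : ρ ∈ operatorsOn S) :
    ρ * X ∈ operatorsOn S := by
  simpa using conjTranspose_mem_operatorsOn
    (mul_mem_operatorsOn_left hX (conjTranspose_mem_operatorsOn hρ))

theorem vecMulVec_star_mem_operatorsOn {ψ χ : m → ℂ} (hψ : ψ ∈ S) (hχ : χ ∈ S) :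
    vecMulVec ψ (star χ) ∈ operatorsOn S := by
  refine ⟨fun v => ?_, fun v => ?_⟩
  · rw [vecMulVec_mulVec, op_smul_eq_smul]; exact S.smul_mem _ hψ
  · rw [conjTranspose_vecMulVec, star_star, vecMulVec_mulVec, op_smul_eq_smul]
    exact S.smul_mem _ hχ

theorem mul_eq_smul_of_mem_operatorsOn {a : ℂ} (hX : ∀ v ∈ S, X *ᵥ v = a • v)
    (hρ : ρ ∈ operatorsOn S) : X * ρ = a • ρ :=
  ext_iff_mulVec.2 fun v => by rw [← mulVec_mulVec, hX _ (hρ.1 v), smul_mulVec]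

theorem mul_conjTranspose_eq_star_smul_of_mem_operatorsOn {a : ℂ} (hX : ∀ v ∈ S, X *ᵥ v = a • v)
    (hρ : ρ ∈ operatorsOn S) : ρ * Xᴴ = star a • ρ := by
  simpa using congrArg conjTranspose
    (mul_eq_smul_of_mem_operatorsOn hX (conjTranspose_mem_operatorsOn hρ))

end OperatorsOn

section Lindblad

variable {M n : ℕ} {J : Fin M → Matrix (Fin n) (Fin n) ℂ} {lam : Fin M → ℝ}

theorem Gam_isHermitian : (Gam J lam).IsHermitian := by
  simp [IsHermitian, Gam, conjTranspose_sum]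

theorem LD_eq_sum_sub_Gam (ρ : Matrix (Fin n) (Fin n) ℂ) :
    LD J lam ρ = ∑ l, (lam l : ℂ) • (J l * ρ * (J l)ᴴ)
      - (1 / 2 : ℂ) • (Gam J lam * ρ + ρ * Gam J lam) := by
  simp only [LD, Gam, Finset.sum_mul, Finset.mul_sum, smul_sub, Finset.sum_sub_distrib,
    smul_add, Finset.smul_sum, smul_mul_assoc, mul_smul_comm, smul_comm (1 / 2 : ℂ)]
  abel

theorem LD_eq_zero_of_mem_operatorsOn {S : Submodule ℂ (Fin n → ℂ)} {c : Fin M → ℂ} {g : ℂ}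
    (hJ : ∀ l, ∀ ψ ∈ S, J l *ᵥ ψ = c l • ψ) (hΓ : ∀ ψ ∈ S, Gam J lam *ᵥ ψ = g • ψ)
    (hg : g = ∑ l, ((lam l * Complex.normSq (c l) : ℝ) : ℂ))
    {ρ : Matrix (Fin n) (Fin n) ℂ} (hρ : ρ ∈ operatorsOn S) : LD J lam ρ = 0 := by
  have hjump : ∀ l, J l * ρ * (J l)ᴴ = (Complex.normSq (c l) : ℂ) • ρ := fun l => by
    rw [mul_eq_smul_of_mem_operatorsOn (hJ l) hρ, smul_mul_assoc,
      mul_conjTranspose_eq_star_smul_of_mem_operatorsOn (hJ l) hρ, smul_smul, Complex.star_def,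
      Complex.mul_conj]
  have hg_real : star g = g := by simp [hg, star_sum]
  have hρΓ : ρ * Gam J lam = g • ρ := by
    simpa [Gam_isHermitian.eq, hg_real] using
      mul_conjTranspose_eq_star_smul_of_mem_operatorsOn hΓ hρ
  rw [LD_eq_sum_sub_Gam, mul_eq_smul_of_mem_operatorsOn hΓ hρ, hρΓ]
  simp only [hjump, smul_smul, ← Finset.sum_smul, hg, Complex.ofReal_mul]
  module

end Lindblad

section Liouvillian

variable {M n : ℕ} {H : Matrix (Fin n) (Fin n) ℂ} {J : Fin M → Matrix (Fin n) (Fin n) ℂ}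
  {lam : Fin M → ℝ}

theorem smul_Liou_eqOn_of_LD_eq_zero {s : Set (Matrix (Fin n) (Fin n) ℂ)}
    (hs : ∀ ρ ∈ s, LD J lam ρ = 0) (t : ℂ) :
    Set.EqOn (t • Liou H J lam)
      (mulLeftAddMulRight ℂ (-(Complex.I * t) • H) ((Complex.I * t) • H)) s := by
  intro ρ hρ
  simp only [_root_.smul_apply, Liou_apply, hs ρ hρ, mulLeftAddMulRight_apply, smul_mul_assoc,
    mul_smul_comm]
  module

end Liouvillian

theorem stmt7_general {M n : ℕ} (H : Matrix (Fin n) (Fin n) ℂ) (hH : H.IsHermitian)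
    (J : Fin M → Matrix (Fin n) (Fin n) ℂ) (lam : Fin M → ℝ)
    (c : Fin M → ℂ) (g : ℂ) (hg : g = ∑ l, ((lam l * Complex.normSq (c l) : ℝ) : ℂ))
    (S : Submodule ℂ (Fin n → ℂ))
    (hinv : ∀ ψ ∈ S, H.mulVec ψ ∈ S)
    (heig : ∀ ψ ∈ S, (∀ l, (J l).mulVec ψ = c l • ψ) ∧ (Gam J lam).mulVec ψ = g • ψ) :
    ∀ ψ₀ ∈ S, ∀ t : ℝ,
      expL H J lam t (vecMulVec ψ₀ (star ψ₀))
          = expM H t * vecMulVec ψ₀ (star ψ₀) * expM H (-t)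
      ∧ LD J lam (expL H J lam t (vecMulVec ψ₀ (star ψ₀))) = 0 := by
  intro ψ₀ hψ₀ t
  set W := operatorsOn S
  have hLD : ∀ ρ ∈ W, LD J lam ρ = 0 := fun ρ hρ =>
    LD_eq_zero_of_mem_operatorsOn (fun l ψ hψ => (heig ψ hψ).1 l) (fun ψ hψ => (heig ψ hψ).2)
      hg hρ
  have hU : Set.MapsTo (mulLeftAddMulRight ℂ (-(Complex.I * t) • H) ((Complex.I * t) • H)) W W := by
    intro ρ hρ
    simp only [mulLeftAddMulRight_apply, smul_mul_assoc, mul_smul_comm]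
    exact W.add_mem (W.smul_mem _ (mul_mem_operatorsOn_left hinv hρ))
      (W.smul_mem _ (mul_mem_operatorsOn_right (by rwa [hH.eq]) hρ))
  have hLU := smul_Liou_eqOn_of_LD_eq_zero (H := H) hLD t
  have hρ₀ := vecMulVec_star_mem_operatorsOn hψ₀ hψ₀
  have hevol : expL H J lam t (vecMulVec ψ₀ (star ψ₀))
      = expM H t * vecMulVec ψ₀ (star ψ₀) * expM H (-t) := by
    refine (exp_apply_eq_of_eqOn hU hLU hρ₀).trans ?_
    rw [exp_mulLeftAddMulRight_apply, expM, expM]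
    congr 3
    push_cast
    ring
  refine ⟨hevol, hLD _ ?_⟩
  exact exp_apply_mem_of_mapsTo W.closed_of_finiteDimensional (hU.congr hLU.symm) hρ₀

/-- Theorem (dynamically stable restricted DFS, sufficiency): if `S` is invariant under the
Hermitian `H` and every `ψ ∈ S` is a simultaneous eigenvector of all `J_l` (eigenvalues
`c_l`) and of `Γ` (eigenvalue `g = Σ_l λ_l |c_l|²`), then every pure state from `S` evolves
unitarily: `exp(t𝓛)(ψ₀ψ₀ᴴ) = exp(−itH) ψ₀ψ₀ᴴ exp(itH)`, and `L_D` vanishes on the evolved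
state for all `t`. -/
theorem stmt7 {M n : ℕ} (H : Matrix (Fin n) (Fin n) ℂ) (hH : H.IsHermitian)
    (J : Fin M → Matrix (Fin n) (Fin n) ℂ) (lam : Fin M → ℝ) (hlam : ∀ l, 0 < lam l)
    (c : Fin M → ℂ) (g : ℂ) (hg : g = ∑ l, ((lam l * Complex.normSq (c l) : ℝ) : ℂ))
    (S : Submodule ℂ (Fin n → ℂ))
    (hinv : ∀ ψ ∈ S, H.mulVec ψ ∈ S)
    (heig : ∀ ψ ∈ S, (∀ l, (J l).mulVec ψ = c l • ψ) ∧ (Gam J lam).mulVec ψ = g • ψ) :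
    ∀ ψ₀ ∈ S, ∀ t : ℝ,
      expL H J lam t (vecMulVec ψ₀ (star ψ₀))
          = expM H t * vecMulVec ψ₀ (star ψ₀) * expM H (-t)
      ∧ LD J lam (expL H J lam t (vecMulVec ψ₀ (star ψ₀))) = 0 :=
  stmt7_general H hH J lam c g hg S hinv heig
end

section
/- In ℂ², let σ_x = [[0,1],[1,0]], σ_y = [[0,−i],[i,0]], σ_z = [[1,0],[0,−1]], σ₊ = [[0,1],[0,0]], and set J = σ₊ + σ_z, λ = 2, H = σ_y, and ψ = (1,0)ᵀ with ρ = ψψᴴ. Then: (i) J ψ = ψ; (ii) L_D[ρ] = −σ_x ≠ 0, where L_D[ρ] = 2 ( J ρ Jᴴ − (1/2) Jᴴ J ρ − (1/2) ρ Jᴴ J ); and (iii) −i[H, ρ] + L_D[ρ] = 0, so ρ is a stationary solution of the Markovian master equation while the decoherence superoperator does not annihilate it. Thus ψ is an incoherently-generated-coherence decoherence-free state. -/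
open Matrix BigOperators

/-- Example of an incoherently-generated-coherence (IGC) decoherence-free state:
in ℂ² with jump operator `J = σ₊ + σ_z` (rate `λ = 2`), Hamiltonian `H = σ_y` and
`ψ = (1,0)ᵀ`, `ρ = ψψᴴ`, one has (i) `J ψ = ψ`, (ii) `L_D[ρ] = −σ_x ≠ 0`, and
(iii) `−i[H,ρ] + L_D[ρ] = 0`. -/
theorem stmt16
    (σx σy σz σp J H : Matrix (Fin 2) (Fin 2) ℂ)
    (hσx : σx = !![0, 1; 1, 0])
    (hσy : σy = !![0, -Complex.I; Complex.I, 0])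
    (hσz : σz = !![1, 0; 0, -1])
    (hσp : σp = !![0, 1; 0, 0])
    (hJ : J = σp + σz) (hH : H = σy)
    (ψ : Fin 2 → ℂ) (hψ : ψ = ![1, 0])
    (ρ LDρ : Matrix (Fin 2) (Fin 2) ℂ)
    (hρ : ρ = vecMulVec ψ (star ψ))
    (hLD : LDρ = (2 : ℂ) • (J * ρ * Jᴴ
      - (1 / 2 : ℂ) • (Jᴴ * J * ρ) - (1 / 2 : ℂ) • (ρ * (Jᴴ * J)))) :
    J.mulVec ψ = ψ
    ∧ LDρ = -σx ∧ LDρ ≠ 0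
    ∧ (-Complex.I) • (H * ρ - ρ * H) + LDρ = 0 := by
  subst hσx hσy hσz hσp hJ hH hψ hρ hLD
  have hρ' : vecMulVec (![1, 0] : Fin 2 → ℂ) (star ![1, 0]) = !![1, 0; 0, 0] := by
    ext i j
    fin_cases i <;> fin_cases j <;>
      simp [vecMulVec_apply, Matrix.cons_val_zero, Matrix.cons_val_one]
  rw [hρ']
  have hJm : (!![0, 1; 0, 0] + !![1, 0; 0, -1] : Matrix (Fin 2) (Fin 2) ℂ)
      = !![1, 1; 0, -1] := by
    ext i j; fin_cases i <;> fin_cases j <;> simp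
  rw [hJm]
  have hJH : (!![1, 1; 0, -1] : Matrix (Fin 2) (Fin 2) ℂ)ᴴ = !![1, 0; 1, -1] := by
    ext i j; fin_cases i <;> fin_cases j <;> simp [conjTranspose_apply]
  rw [hJH]
  refine ⟨?_, ?_, ?_, ?_⟩
  · ext i; fin_cases i <;> simp [mulVec, dotProduct, Fin.sum_univ_two]
  · ext i j; fin_cases i <;> fin_cases j <;>
      simp [Matrix.mul_apply, Fin.sum_univ_two] <;> ring
  · intro h
    have := congrFun (congrFun h 0) 1
    simp [Matrix.mul_apply, Fin.sum_univ_two] at this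
  · ext i j; fin_cases i <;> fin_cases j <;>
      simp [Matrix.mul_apply, Fin.sum_univ_two] <;> ring
end

section
/- Let E_1,…,E_K be n×n complex matrices satisfying the trace-preservation condition Σ_{k=1}^K E_kᴴ E_k = I, and let ψ ∈ ℂⁿ be a unit vector with ρ = ψψᴴ. If the output state σ = Σ_{k=1}^K E_k ρ E_kᴴ satisfies Tr[σ²] = 1, then there exist a unit vector φ ∈ ℂⁿ and complex numbers μ_1,…,μ_K with Σ_{k=1}^K |μ_k|² = 1 such that E_k ψ = μ_k φ for every k, and consequently σ = φφᴴ; equivalently, there exists an n×n unitary matrix U with σ = U ρ Uᴴ. Conversely, if σ = U ρ Uᴴ for some unitary U then Tr[σ²] = 1. Thus a completely positive trace-preserving map in Kraus form acts unitarily on a pure state if and only if it preserves that state's purity. -/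
/-!
Write `v k = E k ψ`, so that `σ = ∑ₖ v k (v k)ᴴ` and trace preservation gives `∑ₖ ‖v k‖² = 1`.
Then `Tr σ² = ∑ₖ ∑ₗ |⟪v k, v l⟫|² ≤ (∑ₖ ‖v k‖²)² = 1` by Cauchy–Schwarz, so purity of `σ` forces
equality in every instance of Cauchy–Schwarz: all `v k` are multiples of a single unit vector `φ`,
and then `σ = φφᴴ`. Any two unit vectors are exchanged by a unitary (extend each to an orthonormal
basis), which gives `σ = UρUᴴ`; conversely, unitary conjugation preserves `Tr ρ² = (ψᴴψ)² = 1`.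
-/

open Matrix BigOperators

section RankOne

variable {l n α : Type*} [Fintype n]

theorem mul_vecMulVec_star_mul_conjTranspose [Semiring α] [StarRing α]
    (A : Matrix l n α) (x : n → α) :
    A * vecMulVec x (star x) * Aᴴ = vecMulVec (A *ᵥ x) (star (A *ᵥ x)) := by
  rw [mul_vecMulVec, vecMulVec_mul, star_mulVec]

theorem trace_vecMulVec_mul_vecMulVec [CommSemiring α] (a b c d : n → α) :
    trace (vecMulVec a b * vecMulVec c d) = (b ⬝ᵥ c) * (a ⬝ᵥ d) := by
  rw [vecMulVec_mul_vecMulVec, trace_vecMulVec, dotProduct_smul, smul_eq_mul]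

theorem star_mulVec_dotProduct_mulVec [Fintype l] [CommSemiring α] [StarRing α]
    (A : Matrix l n α) (x y : n → α) :
    star (A *ᵥ x) ⬝ᵥ (A *ᵥ y) = star x ⬝ᵥ ((Aᴴ * A) *ᵥ y) := by
  rw [star_mulVec, ← dotProduct_mulVec, mulVec_mulVec]

theorem star_smul_dotProduct_smul [CommSemiring α] [StarRing α] (c : α) (x : n → α) :
    star (c • x) ⬝ᵥ (c • x) = (star c * c) * (star x ⬝ᵥ x) := by
  rw [star_smul, smul_dotProduct, dotProduct_smul, smul_smul, smul_eq_mul]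

omit [Fintype n] in
theorem vecMulVec_smul_star_smul [CommSemiring α] [StarRing α] (c : α) (x : n → α) :
    vecMulVec (c • x) (star (c • x)) = (star c * c) • vecMulVec x (star x) := by
  rw [star_smul, smul_vecMulVec, vecMulVec_smul, smul_smul, mul_comm]

end RankOne

section CauchySchwarz

variable {𝕜 E ι : Type*} [RCLike 𝕜] [NormedAddCommGroup E] [InnerProductSpace 𝕜 E] [Fintype ι]

local notation "⟪" x ", " y "⟫" => inner 𝕜 x y

theorem norm_inner_eq_norm_mul_norm_of_sum_sq_eq (v : ι → E)
    (h : ∑ i, ∑ j, ‖⟪v i, v j⟫‖ ^ 2 = (∑ i, ‖v i‖ ^ 2) ^ 2) (i j : ι) :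
    ‖⟪v i, v j⟫‖ = ‖v i‖ * ‖v j‖ := by
  have hle : ∀ p ∈ (Finset.univ : Finset (ι × ι)),
      ‖⟪v p.1, v p.2⟫‖ ^ 2 ≤ (‖v p.1‖ * ‖v p.2‖) ^ 2 := fun p _ =>
    pow_le_pow_left₀ (norm_nonneg _) (norm_inner_le_norm _ _) 2
  have hsum : ∑ p : ι × ι, ‖⟪v p.1, v p.2⟫‖ ^ 2 = ∑ p : ι × ι, (‖v p.1‖ * ‖v p.2‖) ^ 2 := by
    rw [Fintype.sum_prod_type, Fintype.sum_prod_type, h, sq, Finset.sum_mul_sum]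
    simp_rw [mul_pow]
  have := (Finset.sum_eq_sum_iff_of_le hle).1 hsum (i, j) (Finset.mem_univ _)
  exact (sq_eq_sq₀ (norm_nonneg _) (by positivity)).1 this

theorem eq_inner_smul_of_norm_inner_eq {φ y : E} (hφ : ‖φ‖ = 1) (h : ‖⟪φ, y⟫‖ = ‖y‖) :
    y = ⟪φ, y⟫ • φ := by
  have hφ0 : φ ≠ 0 := norm_ne_zero_iff.1 (by simp [hφ])
  have hcs : φ = 0 ∨ y = (⟪φ, y⟫ / ⟪φ, φ⟫) • φ :=
    ((norm_inner_eq_norm_tfae 𝕜 φ y).out 0 1).1 (by rw [h, hφ, one_mul])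
  rwa [inner_self_eq_norm_sq_to_K, hφ, RCLike.ofReal_one, one_pow, div_one,
    or_iff_right hφ0] at hcs

theorem exists_forall_eq_inner_smul_of_sum_sq_eq (v : ι → E) (hv : v ≠ 0)
    (h : ∑ i, ∑ j, ‖⟪v i, v j⟫‖ ^ 2 = (∑ i, ‖v i‖ ^ 2) ^ 2) :
    ∃ φ : E, ‖φ‖ = 1 ∧ ∀ i, v i = ⟪φ, v i⟫ • φ := by
  obtain ⟨i₀, hi₀⟩ := Function.ne_iff.1 hv
  refine ⟨(‖v i₀‖⁻¹ : 𝕜) • v i₀, norm_smul_inv_norm hi₀, fun j => ?_⟩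
  refine eq_inner_smul_of_norm_inner_eq (norm_smul_inv_norm hi₀) ?_
  rw [inner_smul_left, norm_mul, RCLike.norm_conj, norm_inv, RCLike.norm_ofReal, abs_norm,
    norm_inner_eq_norm_mul_norm_of_sum_sq_eq v h, inv_mul_cancel_left₀ (norm_ne_zero_iff.2 hi₀)]

end CauchySchwarz

section Unitary

variable {𝕜 ι : Type*} [RCLike 𝕜] [Fintype ι]

theorem star_dotProduct_eq_inner (a b : ι → 𝕜) :
    star a ⬝ᵥ b = inner 𝕜 (WithLp.toLp 2 a : EuclideanSpace 𝕜 ι) (WithLp.toLp 2 b) := by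
  rw [EuclideanSpace.inner_toLp_toLp, dotProduct_comm]

theorem norm_toLp_eq_one {ψ : ι → 𝕜} (hψ : star ψ ⬝ᵥ ψ = 1) :
    ‖(WithLp.toLp 2 ψ : EuclideanSpace 𝕜 ι)‖ = 1 := by
  have h : ((‖(WithLp.toLp 2 ψ : EuclideanSpace 𝕜 ι)‖ ^ 2 : ℝ) : 𝕜) = 1 := by
    rw [RCLike.ofReal_pow, ← inner_self_eq_norm_sq_to_K, ← star_dotProduct_eq_inner, hψ]
  exact (pow_eq_one_iff_of_nonneg (norm_nonneg _) two_ne_zero).1 (by exact_mod_cast h)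

theorem exists_mem_unitaryGroup_mulVec_single [DecidableEq ι] {ψ : ι → 𝕜}
    (hψ : star ψ ⬝ᵥ ψ = 1) (i : ι) :
    ∃ B ∈ unitaryGroup ι 𝕜, B *ᵥ Pi.single i 1 = ψ := by
  have hon : Orthonormal 𝕜
      (({i} : Set ι).domRestrict fun _ => (WithLp.toLp 2 ψ : EuclideanSpace 𝕜 ι)) :=
    ⟨fun _ => norm_toLp_eq_one hψ, fun a b hab => (hab (Subsingleton.elim a b)).elim⟩
  obtain ⟨b, hb⟩ := hon.exists_orthonormalBasis_extension_of_card_eq (by simp)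
  refine ⟨(EuclideanSpace.basisFun ι 𝕜).toBasis.toMatrix b,
    (EuclideanSpace.basisFun ι 𝕜).toMatrix_orthonormalBasis_mem_unitary b, ?_⟩
  ext k
  simp [Module.Basis.toMatrix_apply, hb i rfl]

theorem exists_mem_unitaryGroup_mulVec_eq [DecidableEq ι] {ψ φ : ι → 𝕜} (hψ : star ψ ⬝ᵥ ψ = 1)
    (hφ : star φ ⬝ᵥ φ = 1) : ∃ U ∈ unitaryGroup ι 𝕜, U *ᵥ ψ = φ := by
  obtain ⟨i⟩ : Nonempty ι := by
    by_contra h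
    rw [not_nonempty_iff] at h
    simp [dotProduct] at hψ
  obtain ⟨A, hA, hAψ⟩ := exists_mem_unitaryGroup_mulVec_single hψ i
  obtain ⟨B, hB, hBφ⟩ := exists_mem_unitaryGroup_mulVec_single hφ i
  refine ⟨B * star A, mul_mem hB (Unitary.star_mem hA), ?_⟩
  rw [← hAψ, mulVec_mulVec, Matrix.mul_assoc, mem_unitaryGroup_iff'.1 hA, Matrix.mul_one, hBφ]

end Unitary

section PureState

variable {𝕜 ι κ : Type*} [RCLike 𝕜] [Fintype ι] [Fintype κ]

theorem trace_vecMulVec_star_sq (x : ι → 𝕜) :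
    trace (vecMulVec x (star x) * vecMulVec x (star x)) = (star x ⬝ᵥ x) ^ 2 := by
  rw [trace_vecMulVec_mul_vecMulVec, dotProduct_comm x, sq]

theorem trace_sum_vecMulVec_star_sq (v : κ → ι → 𝕜) :
    trace ((∑ k, vecMulVec (v k) (star (v k))) * ∑ k, vecMulVec (v k) (star (v k))) =
      ∑ k, ∑ l, (star (v k) ⬝ᵥ v l) * (star (v l) ⬝ᵥ v k) := by
  simp only [Finset.sum_mul_sum, trace_sum, trace_vecMulVec_mul_vecMulVec, dotProduct_comm (v _)]

theorem exists_eq_smul_of_trace_sum_vecMulVec_star_sq_eq_one (v : κ → ι → 𝕜)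
    (hv : ∑ k, star (v k) ⬝ᵥ v k = 1)
    (hpure : trace ((∑ k, vecMulVec (v k) (star (v k))) * ∑ k, vecMulVec (v k) (star (v k))) = 1) :
    ∃ (φ : ι → 𝕜) (μ : κ → 𝕜), star φ ⬝ᵥ φ = 1 ∧ ∀ k, v k = μ k • φ := by
  set w : κ → EuclideanSpace 𝕜 ι := fun k => WithLp.toLp 2 (v k)
  have hnorm : ∑ k, ‖w k‖ ^ 2 = 1 := by
    have : ((∑ k, ‖w k‖ ^ 2 : ℝ) : 𝕜) = 1 := by
      simp only [RCLike.ofReal_sum, RCLike.ofReal_pow, ← inner_self_eq_norm_sq_to_K, w,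
        ← star_dotProduct_eq_inner, hv]
    exact_mod_cast this
  have hterm (k l : κ) : (star (v k) ⬝ᵥ v l) * (star (v l) ⬝ᵥ v k) =
      ((‖inner 𝕜 (w k) (w l)‖ ^ 2 : ℝ) : 𝕜) := by
    rw [star_dotProduct_eq_inner, star_dotProduct_eq_inner (v l), ← inner_conj_symm (w l) (w k),
      RCLike.mul_conj, RCLike.ofReal_pow]
  have hgram : ∑ k, ∑ l, ‖inner 𝕜 (w k) (w l)‖ ^ 2 = 1 := by
    have : ((∑ k, ∑ l, ‖inner 𝕜 (w k) (w l)‖ ^ 2 : ℝ) : 𝕜) = 1 := by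
      simp only [RCLike.ofReal_sum, ← hterm, ← trace_sum_vecMulVec_star_sq, hpure]
    exact_mod_cast this
  have hw : w ≠ 0 := fun h => by simp [h] at hnorm
  obtain ⟨φ, hφ, hφw⟩ :=
    exists_forall_eq_inner_smul_of_sum_sq_eq w hw (by rw [hgram, hnorm, one_pow])
  refine ⟨WithLp.ofLp φ, fun k => inner 𝕜 φ (w k), ?_, fun k => congrArg WithLp.ofLp (hφw k)⟩
  rw [star_dotProduct_eq_inner, WithLp.toLp_ofLp, inner_self_eq_norm_sq_to_K, hφ,
    RCLike.ofReal_one, one_pow]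

theorem trace_sq_unitary_conj_vecMulVec_star [DecidableEq ι] {U : Matrix ι ι 𝕜}
    (hU : U ∈ unitaryGroup ι 𝕜) {ψ : ι → 𝕜} (hψ : star ψ ⬝ᵥ ψ = 1) :
    trace ((U * vecMulVec ψ (star ψ) * Uᴴ) * (U * vecMulVec ψ (star ψ) * Uᴴ)) = 1 := by
  rw [mul_vecMulVec_star_mul_conjTranspose, trace_vecMulVec_star_sq,
    star_mulVec_dotProduct_mulVec, ← star_eq_conjTranspose, mem_unitaryGroup_iff'.1 hU,
    one_mulVec, hψ, one_pow]

end PureState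

/-- A CPTP map in Kraus form acts unitarily on a pure state iff it preserves that state's
purity: if `Σ_k E_kᴴ E_k = I`, `ψ` is a unit vector, `ρ = ψψᴴ` and `σ = Σ_k E_k ρ E_kᴴ`
has `Tr[σ²] = 1`, then there are a unit vector `φ` and scalars `μ_k` with `Σ_k |μ_k|² = 1`,
`E_k ψ = μ_k φ` and `σ = φφᴴ`; equivalently `σ = U ρ Uᴴ` for some unitary `U`.
Conversely, `σ = U ρ Uᴴ` with `U` unitary implies `Tr[σ²] = 1`. -/
theorem stmt18 {n K : ℕ} (E : Fin K → Matrix (Fin n) (Fin n) ℂ)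
    (hTP : ∑ k, (E k)ᴴ * E k = 1)
    (ψ : Fin n → ℂ) (hψ : star ψ ⬝ᵥ ψ = 1)
    (ρ σ : Matrix (Fin n) (Fin n) ℂ)
    (hρ : ρ = vecMulVec ψ (star ψ))
    (hσ : σ = ∑ k, E k * ρ * (E k)ᴴ) :
    (Matrix.trace (σ * σ) = 1 →
      (∃ (φ : Fin n → ℂ) (μ : Fin K → ℂ),
          star φ ⬝ᵥ φ = 1 ∧ (∑ k, Complex.normSq (μ k)) = 1
          ∧ (∀ k, (E k).mulVec ψ = μ k • φ)
          ∧ σ = vecMulVec φ (star φ))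
      ∧ ∃ U ∈ Matrix.unitaryGroup (Fin n) ℂ, σ = U * ρ * Uᴴ)
    ∧ ((∃ U ∈ Matrix.unitaryGroup (Fin n) ℂ, σ = U * ρ * Uᴴ) →
        Matrix.trace (σ * σ) = 1) := by
  set v : Fin K → Fin n → ℂ := fun k => E k *ᵥ ψ
  have hσv : σ = ∑ k, vecMulVec (v k) (star (v k)) := by
    simp only [hσ, hρ, mul_vecMulVec_star_mul_conjTranspose, v]
  have hv : ∑ k, star (v k) ⬝ᵥ v k = 1 := by
    simp only [v, star_mulVec_dotProduct_mulVec, ← dotProduct_sum, ← sum_mulVec, hTP,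
      one_mulVec, hψ]
  have hnormSq (c : ℂ) : star c * c = Complex.normSq c := by
    rw [Complex.star_def, Complex.normSq_eq_conj_mul_self]
  refine ⟨fun hpure => ?_, fun ⟨U, hU, hσU⟩ => ?_⟩
  · obtain ⟨φ, μ, hφ, hvφ⟩ :=
      exists_eq_smul_of_trace_sum_vecMulVec_star_sq_eq_one v hv (hσv ▸ hpure)
    have hμ : ∑ k, (Complex.normSq (μ k) : ℂ) = 1 := by
      simpa only [hvφ, star_smul_dotProduct_smul, hφ, mul_one, hnormSq] using hv
    have hσφ : σ = vecMulVec φ (star φ) := by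
      simp only [hσv, hvφ, vecMulVec_smul_star_smul, hnormSq, ← Finset.sum_smul, hμ, one_smul]
    obtain ⟨U, hU, hUψ⟩ := exists_mem_unitaryGroup_mulVec_eq hψ hφ
    refine ⟨⟨φ, μ, hφ, by exact_mod_cast hμ, hvφ, hσφ⟩, U, hU, ?_⟩
    rw [hσφ, hρ, mul_vecMulVec_star_mul_conjTranspose, hUψ]
  · rw [hσU, hρ]
    exact trace_sq_unitary_conj_vecMulVec_star hU hψ
end

section
/- Fix r > 0 and γ > 0, and set s = sinh r, c = cosh r. In ℂ², let σ₊ = [[0,1],[0,0]], σ₋ = [[0,0],[1,0]], σ_y = [[0,−i],[i,0]], and define the single jump operator J = c σ₋ + s σ₊ = [[0,s],[c,0]] with rate λ = γ, the Hamiltonian H = (γ/2)·√(s c)·(s − c)·σ_y, and the unit vector ψ = (√s, √c)ᵀ / √(s + c) with ρ = ψψᴴ. Then: (i) J ψ = √(s c) · ψ; (ii) −i[H, ρ] + L_D[ρ] = 0, so ρ is a stationary (decoherence-free) solution of the Markovian master equation; and (iii) L_D[ρ] ≠ 0, so ψ is an incoherently-generated-coherence state. (This models a driven two-level atom in a squeezed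 vacuum reservoir with squeezing parameter r.) -/
open Matrix BigOperators

set_option maxHeartbeats 1000000

/-- Driven two-level atom in a squeezed vacuum reservoir (squeezing parameter `r > 0`,
rate `γ > 0`, `s = sinh r`, `c = cosh r`): with jump operator `J = c σ₋ + s σ₊`,
Hamiltonian `H = (γ/2)√(sc)(s−c) σ_y` and unit vector `ψ = (√s, √c)ᵀ/√(s+c)`, `ρ = ψψᴴ`,
one has (i) `J ψ = √(sc) ψ`; (ii) `−i[H,ρ] + L_D[ρ] = 0` (stationary decoherence-free
state); and (iii) `L_D[ρ] ≠ 0`, so `ψ` is an incoherently-generated-coherence state. -/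
theorem stmt19 (r γ s c : ℝ) (hr : 0 < r) (hγ : 0 < γ)
    (hs : s = Real.sinh r) (hc : c = Real.cosh r)
    (σp σm σy J H : Matrix (Fin 2) (Fin 2) ℂ)
    (hσp : σp = !![0, 1; 0, 0]) (hσm : σm = !![0, 0; 1, 0])
    (hσy : σy = !![0, -Complex.I; Complex.I, 0])
    (hJ : J = (c : ℂ) • σm + (s : ℂ) • σp)
    (hH : H = ((γ / 2 * Real.sqrt (s * c) * (s - c) : ℝ) : ℂ) • σy)
    (ψ : Fin 2 → ℂ)
    (hψ : ψ = ![((Real.sqrt s / Real.sqrt (s + c) : ℝ) : ℂ),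
                ((Real.sqrt c / Real.sqrt (s + c) : ℝ) : ℂ)])
    (ρ LDρ : Matrix (Fin 2) (Fin 2) ℂ)
    (hρ : ρ = vecMulVec ψ (star ψ))
    (hLD : LDρ = (γ : ℂ) • (J * ρ * Jᴴ
      - (1 / 2 : ℂ) • (Jᴴ * J * ρ) - (1 / 2 : ℂ) • (ρ * (Jᴴ * J)))) :
    star ψ ⬝ᵥ ψ = 1
    ∧ J.mulVec ψ = ((Real.sqrt (s * c) : ℝ) : ℂ) • ψ
    ∧ (-Complex.I) • (H * ρ - ρ * H) + LDρ = 0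
    ∧ LDρ ≠ 0 := by
  have hs0 : 0 < s := by rw [hs]; exact Real.sinh_pos_iff.mpr hr
  have hc0 : 0 < c := by rw [hc]; exact Real.cosh_pos r
  have hsltc : s < c := by rw [hs, hc]; exact Real.sinh_lt_cosh r
  set A := Real.sqrt s with hA
  set B := Real.sqrt c with hB
  set D := Real.sqrt (s + c) with hD
  set E := Real.sqrt (s * c) with hE
  have hA2 : A * A = s := Real.mul_self_sqrt hs0.le
  have hB2 : B * B = c := Real.mul_self_sqrt hc0.le
  have hD2 : D * D = s + c := Real.mul_self_sqrt (by linarith)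
  have hEAB : E = A * B := Real.sqrt_mul hs0.le c
  have hA0 : 0 < A := Real.sqrt_pos.mpr hs0
  have hB0 : 0 < B := Real.sqrt_pos.mpr hc0
  have hD0 : 0 < D := Real.sqrt_pos.mpr (by linarith)
  have hDne : (D : ℂ) ≠ 0 := by exact_mod_cast hD0.ne'
  have hA2' : (A:ℂ)*A = s := by exact_mod_cast hA2
  have hB2' : (B:ℂ)*B = c := by exact_mod_cast hB2
  have hE' : (E:ℂ) = (A:ℂ)*B := by exact_mod_cast hEAB
  set a : ℂ := ((A / D : ℝ) : ℂ) with ha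
  set b : ℂ := ((B / D : ℝ) : ℂ) with hb
  have hψ' : ψ = ![a, b] := by rw [hψ]
  have hJ2 : J = !![0, (s:ℂ); (c:ℂ), 0] := by
    rw [hJ, hσm, hσp]; ext i j; fin_cases i <;> fin_cases j <;> simp
  have hJH : Jᴴ = !![0, (c:ℂ); (s:ℂ), 0] := by
    rw [hJ2]; ext i j; fin_cases i <;> fin_cases j <;>
      simp [conjTranspose_apply]
  have hρ2 : ρ = !![a*a, a*b; b*a, b*b] := by
    rw [hρ, hψ']; ext i j; fin_cases i <;> fin_cases j <;>
      simp [vecMulVec_apply, ha, hb, Complex.conj_ofReal, mul_comm]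
  set k : ℂ := ((γ / 2 * E * (s - c) : ℝ) : ℂ) with hk
  have hH2 : H = !![0, -(k * Complex.I); k * Complex.I, 0] := by
    rw [hH, hσy]; ext i j; fin_cases i <;> fin_cases j <;> simp [hk]
  refine ⟨?_, ?_, ?_, ?_⟩
  · rw [hψ']
    simp [dotProduct, Fin.sum_univ_two, ha, hb, Complex.conj_ofReal]
    have h1 : A/D * (A/D) + B/D * (B/D) = 1 := by
      field_simp; nlinarith
    exact_mod_cast h1
  · rw [hJ2, hψ']
    funext i
    fin_cases i
    · simp [Matrix.mulVec, dotProduct, Fin.sum_univ_two, hEAB, ha, hb]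
      field_simp
      linear_combination (-(B:ℂ)) * hA2'
    · simp [Matrix.mulVec, dotProduct, Fin.sum_univ_two, hEAB, ha, hb]
      field_simp
      linear_combination (-(A:ℂ)) * hB2'
  · rw [hLD, hH2, hρ2, hJH, hJ2]
    ext i j
    fin_cases i <;> fin_cases j <;>
    · simp [Matrix.mul_apply, Fin.sum_univ_two, ha, hb, hk, hEAB]
      rw [← hA2', ← hB2']
      field_simp
      ring_nf
      simp only [Complex.I_sq]
      field_simp
      ring
  · rw [hLD, hρ2, hJH, hJ2]
    intro h0
    have h00 := congrFun (congrFun h0 0) 0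
    simp [Matrix.mul_apply, Fin.sum_univ_two, ha, hb] at h00
    rcases h00 with h | h
    · exact hγ.ne' h
    · norm_cast at h
      have haa : A/D*(A/D) = s/(s+c) := by
        rw [div_mul_div_comm, hA2, hD2]
      have hbb : B/D*(B/D) = c/(s+c) := by
        rw [div_mul_div_comm, hB2, hD2]
      rw [haa, hbb] at h
      have hsc : (0:ℝ) < s + c := by linarith
      clear h0
      have hre : ((s * (c / (s + c)) * s - 2⁻¹ * (c * c * (s / (s + c)))
          - 2⁻¹ * (s / (s + c) * (c * c)) : ℝ) : ℂ) = 0 := by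
        push_cast at h ⊢; linear_combination h
      rw [Complex.ofReal_eq_zero] at hre
      have heq : s * (c / (s + c)) * s - 2⁻¹ * (c * c * (s / (s + c)))
          - 2⁻¹ * (s / (s + c) * (c * c)) = s * c * (s - c) / (s + c) := by ring
      rw [heq, div_eq_zero_iff] at hre
      clear heq h haa hbb hLD hρ hψ hψ' hJ2 hJH hρ2 hH2 hH hJ hσp hσm hσy hk ha hb hDne hA2' hB2' hE' hs hc hA hB hD hE
      rcases hre with h1 | h1
      · nlinarith [mul_pos hs0 hc0]
      · linarith
end
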